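/- arXiv:1210.4367 — 7 statements merged into one kernel-verified Lean document; each statement's English description precedes it below -/
import Mathlib

section
/- Every standard graph with not all labels zero admits at least one standard decomposition. -/
/-- A labeled graph on node set `V` with edge set `E` is *standard* if all labels are
non-negative and labels are compatible with the edge relation. -/
def IsStandard {V : Type*} (E : Set (V × V)) (l : V → ℤ) : Prop :=
  (∀ v, 0 ≤ l v) ∧ ∀ e ∈ E, l e.1 ≤ l e.2

/-- A labeling is a *0-1 labeling* if every label is 0 or 1. -/
def IsZeroOne {V : Type*} (l : V → ℤ) : Prop := ∀ v, l v = 0 ∨ l v = 1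

/-- `H` is a *standard component* of `G` (same nodes and edges): `H` is a standard 0-1
graph, `G - H` is standard, and not all labels of `H` are zero. -/
def IsStdComp {V : Type*} (E : Set (V × V)) (G H : V → ℤ) : Prop :=
  IsStandard E H ∧ IsZeroOne H ∧ IsStandard E (G - H) ∧ ∃ v, H v ≠ 0

/-- A *standard decomposition* of `G`: a multiset of standard components of `G`
whose pointwise label sum equals the labeling of `G`. -/
def IsStdDecomp {V : Type*} (E : Set (V × V)) (G : V → ℤ) (D : Multiset (V → ℤ)) : Prop :=
  (∀ H ∈ D, IsStdComp E G H) ∧ D.sum = G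

private lemma isStandard_add {V : Type*} {E : Set (V × V)} {f g : V → ℤ}
    (hf : IsStandard E f) (hg : IsStandard E g) : IsStandard E (f + g) :=
  ⟨fun v => add_nonneg (hf.1 v) (hg.1 v),
   fun e he => add_le_add (hf.2 e he) (hg.2 e he)⟩

private lemma exists_stdDecomp_aux {V : Type*} [Fintype V] (E : Set (V × V)) :
    ∀ n : ℕ, ∀ G : V → ℤ, IsStandard E G → (∃ v, G v ≠ 0) →
      (∑ v, (G v).toNat) ≤ n → ∃ D : Multiset (V → ℤ), IsStdDecomp E G D := by
  intro n
  induction n with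
  | zero =>
    intro G hG hne hsum
    obtain ⟨v, hv⟩ := hne
    exfalso
    have h0 : (G v).toNat = 0 := by
      have h := Finset.single_le_sum (f := fun w => (G w).toNat)
        (fun w _ => Nat.zero_le _) (Finset.mem_univ v)
      omega
    have := hG.1 v
    omega
  | succ n ih =>
    intro G hG hne hsum
    classical
    set H : V → ℤ := fun v => if 1 ≤ G v then 1 else 0 with hH
    have hHstd : IsStandard E H := by
      constructor
      · intro v; simp only [hH]; split <;> norm_num
      · intro e he
        have h1 := hG.2 e he
        simp only [hH]; split <;> split <;> omega
    have hH01 : IsZeroOne H := by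
      intro v; simp only [hH]; split <;> simp
    have hGHstd : IsStandard E (G - H) := by
      constructor
      · intro v
        have := hG.1 v
        simp only [Pi.sub_apply, hH]; split <;> omega
      · intro e he
        have h1 := hG.2 e he
        have ha := hG.1 e.1
        simp only [Pi.sub_apply, hH]; split <;> split <;> omega
    have hHne : ∃ v, H v ≠ 0 := by
      obtain ⟨v, hv⟩ := hne
      have := hG.1 v
      exact ⟨v, by simp only [hH]; rw [if_pos (by omega)]; norm_num⟩
    have hcomp : IsStdComp E G H := ⟨hHstd, hH01, hGHstd, hHne⟩
    by_cases hGH : ∃ v, (G - H) v ≠ 0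
    · have hlt : (∑ v, ((G - H) v).toNat) ≤ n := by
        obtain ⟨v, hv⟩ := hne
        have hpos : 1 ≤ G v := by have := hG.1 v; omega
        have hle : ∀ w, ((G - H) w).toNat ≤ (G w).toNat := by
          intro w
          have := hG.1 w
          simp only [Pi.sub_apply, hH]; split <;> omega
        have hltv : ((G - H) v).toNat < (G v).toNat := by
          simp only [Pi.sub_apply, hH, if_pos hpos]; omega
        have : (∑ w, ((G - H) w).toNat) < ∑ w, (G w).toNat :=
          Finset.sum_lt_sum (fun w _ => hle w) ⟨v, Finset.mem_univ v, hltv⟩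
        omega
      obtain ⟨D, hD⟩ := ih (G - H) hGHstd hGH hlt
      refine ⟨H ::ₘ D, ?_, ?_⟩
      · intro K hK
        rcases Multiset.mem_cons.mp hK with rfl | hK
        · exact hcomp
        · obtain ⟨hK1, hK2, hK3, hK4⟩ := hD.1 K hK
          refine ⟨hK1, hK2, ?_, hK4⟩
          have : G - K = (G - H - K) + H := by ring
          rw [this]
          exact isStandard_add hK3 hHstd
      · simp [Multiset.sum_cons, hD.2]
    · push_neg at hGH
      refine ⟨{H}, ?_, ?_⟩
      · intro K hK
        rw [Multiset.mem_singleton] at hK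
        subst hK; exact hcomp
      · have : G - H = 0 := funext fun v => hGH v
        simp only [Multiset.sum_singleton]
        have := sub_eq_zero.mp this
        exact this.symm

/-- Every standard graph with not all labels zero admits a standard decomposition. -/
theorem exists_stdDecomp {V : Type*} [Fintype V] (E : Set (V × V)) (hE : ∀ v, (v, v) ∉ E)
    (G : V → ℤ) (hG : IsStandard E G) (hne : ∃ v, G v ≠ 0) :
    ∃ D : Multiset (V → ℤ), IsStdDecomp E G D :=
  exists_stdDecomp_aux E (∑ v, (G v).toNat) G hG hne le_rfl
end

section
/- Let G be a labeled graph, A a multiset of standard 0-1 subgraphs of G (all with the same nodes and edges as G), and B a submultiset of A. Then A is a standard decomposition of G if and only if A ∖ B is a standard decomposition of G − ΣB. -/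
lemma std_sum {V : Type*} (E : Set (V × V)) (D : Multiset (V → ℤ))
    (h : ∀ a ∈ D, IsStandard E a) : IsStandard E D.sum := by
  induction D using Multiset.induction with
  | empty => exact ⟨fun v => le_refl 0, fun e _ => le_refl 0⟩
  | cons a s ih =>
    have ha := h a (Multiset.mem_cons_self a s)
    have hs := ih (fun b hb => h b (Multiset.mem_cons_of_mem hb))
    rw [Multiset.sum_cons]
    exact ⟨fun v => add_nonneg (ha.1 v) (hs.1 v),
      fun e he => add_le_add (ha.2 e he) (hs.2 e he)⟩

lemma decomp_iff_sum {V : Type*} (E : Set (V × V)) (G : V → ℤ) (A : Multiset (V → ℤ))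
    (hA : ∀ a ∈ A, IsStandard E a ∧ IsZeroOne a ∧ ∃ v, a v ≠ 0) :
    IsStdDecomp E G A ↔ A.sum = G := by
  constructor
  · exact fun h => h.2
  · intro hsum
    classical
    refine ⟨fun H hH => ?_, hsum⟩
    obtain ⟨h1, h2, h3⟩ := hA H hH
    refine ⟨h1, h2, ?_, h3⟩
    have : G - H = (A.erase H).sum := by
      have := Multiset.cons_erase hH
      have hs : A.sum = H + (A.erase H).sum := by
        conv_lhs => rw [← this]
        rw [Multiset.sum_cons]
      rw [← hsum, hs]; ring
    rw [this]
    exact std_sum E _ (fun b hb => (hA b (Multiset.mem_of_mem_erase hb)).1)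

/-- Let `A` be a multiset of standard 0-1 graphs (same nodes/edges as `G`, not identically
zero) and `B` a submultiset of `A`. Then `A` is a standard decomposition of `G` iff
`A - B` is a standard decomposition of `G - ΣB`. -/
theorem part_decomp {V : Type*} [Fintype V] (E : Set (V × V)) (hE : ∀ v, (v, v) ∉ E)
    (G : V → ℤ) (A B : Multiset (V → ℤ))
    (hA : ∀ a ∈ A, IsStandard E a ∧ IsZeroOne a ∧ ∃ v, a v ≠ 0) (hB : B ≤ A) :
    IsStdDecomp E G A ↔ IsStdDecomp E (G - B.sum) (A - B) := by
  have hA' : ∀ a ∈ A - B, IsStandard E a ∧ IsZeroOne a ∧ ∃ v, a v ≠ 0 :=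
    fun a ha => hA a (Multiset.mem_of_le (Multiset.sub_le_self A B) ha)
  rw [decomp_iff_sum E G A hA, decomp_iff_sum E _ _ hA']
  have key : A.sum = B.sum + (A - B).sum := by
    conv_lhs => rw [← tsub_add_cancel_of_le hB]
    rw [Multiset.sum_add]; ring
  constructor
  · intro h; rw [← h, key]; ring
  · intro h; rw [key, h]; ring
end

section
/- Let v be a node of minimal positive label in a labeled graph G, let 𝓗 be a multiset of standard components of G each giving v the label 1 such that G − Σ𝓗 is standard, and let H be the maximal standard component of G. Then 𝓗 together with ℓ_G(v) − |𝓗| copies of H is a standard v-decomposition of G. -/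
/-- A *standard `v`-decomposition* of `G`: a multiset of standard components of `G`, each
giving `v` the label 1, such that `G - ΣH` is standard and the cardinality equals the
label of `v` in `G`. -/
def IsStdVDecomp {V : Type*} (E : Set (V × V)) (G : V → ℤ) (v : V)
    (D : Multiset (V → ℤ)) : Prop :=
  (∀ H ∈ D, IsStdComp E G H ∧ H v = 1) ∧ IsStandard E (G - D.sum) ∧ (D.card : ℤ) = G v

/-- The *maximal standard component* of `G`: label 1 exactly at nodes with positive label. -/
def maxComp {V : Type*} (G : V → ℤ) : V → ℤ := fun v => if 0 < G v then 1 else 0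

/-- If `v` has minimal positive label, `H` is a multiset of standard components of `G`
each giving `v` the label 1 with `G - ΣH` standard, then `H` together with
`l_G v - card H` copies of the maximal standard component is a standard
`v`-decomposition of `G`. -/
theorem relevant_extension {V : Type*} [Fintype V] (E : Set (V × V)) (hE : ∀ v, (v, v) ∉ E)
    (G : V → ℤ) (hG : IsStandard E G) (v : V)
    (hv : 0 < G v ∧ ∀ w, 0 < G w → G v ≤ G w)
    (H : Multiset (V → ℤ)) (hH : ∀ K ∈ H, IsStdComp E G K ∧ K v = 1)
    (hsub : IsStandard E (G - H.sum)) :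
    IsStdVDecomp E G v (H + Multiset.replicate (G v - H.card).toNat (maxComp G)) := by

  obtain ⟨hGv, hmin⟩ := hv
  -- evaluating the sum of a multiset of functions pointwise
  have hsum_apply : ∀ (S : Multiset (V → ℤ)) (w : V), S.sum w = (S.map (fun f => f w)).sum := by
    intro S w
    induction S using Multiset.induction with
    | empty => simp
    | cons a s ih => simp [ih]
  -- sum at v equals card
  have hsumv : H.sum v = H.card := by
    rw [hsum_apply]
    have : H.map (fun f => f v) = Multiset.replicate H.card 1 := by
      apply Multiset.eq_replicate.mpr
      constructor
      · simp
      · intro b hb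
        obtain ⟨K, hK, hKb⟩ := Multiset.mem_map.mp hb
        rw [← hKb]; exact (hH K hK).2
    rw [this, Multiset.sum_replicate]; simp
  -- sum is bounded by card pointwise
  have hle : ∀ w, H.sum w ≤ H.card := by
    intro w
    rw [hsum_apply]
    calc (H.map (fun f => f w)).sum ≤ (H.map (fun _ => (1:ℤ))).sum := by
          apply Multiset.sum_map_le_sum_map
          intro K hK
          rcases (hH K hK).1.2.1 w with h | h <;> omega
      _ = H.card := by simp [Multiset.map_const, Multiset.sum_replicate]
  -- sum is nonnegative pointwise
  have hpos : ∀ w, 0 ≤ H.sum w := by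
    intro w
    rw [hsum_apply]
    apply Multiset.sum_nonneg
    intro b hb
    obtain ⟨K, hK, hKb⟩ := Multiset.mem_map.mp hb
    rw [← hKb]; exact (hH K hK).1.1.1 w
  have hcard : (H.card : ℤ) ≤ G v := by
    have := hsub.1 v
    simp only [Pi.sub_apply] at this
    omega
  have hn : ((G v - H.card).toNat : ℤ) = G v - H.card := Int.toNat_of_nonneg (by omega)
  set n := (G v - H.card).toNat with hn_def
  -- key inequality: at positive nodes there is room for n more copies
  have hkey : ∀ w, 0 < G w → (G v - H.card : ℤ) ≤ G w - H.sum w := by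
    intro w hw
    have h1 := hmin w hw
    have h2 := hle w
    omega
  -- maxComp is a standard component
  have hmcstd : IsStdComp E G (maxComp G) := by
    refine ⟨⟨fun w => ?_, fun e he => ?_⟩, fun w => ?_, ⟨fun w => ?_, fun e he => ?_⟩, ⟨v, ?_⟩⟩
    · simp only [maxComp]; split_ifs <;> omega
    · have := hG.2 e he
      simp only [maxComp]; split_ifs <;> omega
    · simp only [maxComp]; split_ifs <;> simp
    · have := hG.1 w
      simp only [Pi.sub_apply, maxComp]; split_ifs <;> omega
    · have h1 := hG.2 e he
      have h2 := hG.1 e.1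
      have h3 := hG.1 e.2
      simp only [Pi.sub_apply, maxComp]; split_ifs <;> omega
    · simp only [maxComp, if_pos hGv]; omega
  have hmcv : maxComp G v = 1 := by simp only [maxComp, if_pos hGv]
  -- each component a = 0 implies H.sum a = G a (when G a = 0)
  have hzero : ∀ w, G w = 0 → H.sum w = 0 := by
    intro w hw
    have h1 := hsub.1 w
    simp only [Pi.sub_apply] at h1
    have h2 := hpos w
    omega
  refine ⟨?_, ?_, ?_⟩
  · intro K hK
    rcases Multiset.mem_add.mp hK with h | h
    · exact hH K h
    · rw [Multiset.eq_of_mem_replicate h]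
      exact ⟨hmcstd, hmcv⟩
  · have hsum_total : ∀ w, (H + Multiset.replicate n (maxComp G)).sum w
        = H.sum w + (G v - H.card) * maxComp G w := by
      intro w
      rw [Multiset.sum_add, Multiset.sum_replicate]
      simp only [Pi.add_apply, Pi.mul_apply, Pi.smul_apply, Pi.natCast_apply, nsmul_eq_mul, hn]
    constructor
    · intro w
      simp only [Pi.sub_apply, hsum_total]
      by_cases hw : 0 < G w
      · have := hkey w hw
        simp only [maxComp, if_pos hw]
        omega
      · have hGw : G w = 0 := le_antisymm (by omega) (hG.1 w)
        simp only [maxComp, if_neg hw, mul_zero]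
        rw [hzero w hGw, hGw]; omega
    · intro e he
      have h1 := hsub.2 e he
      simp only [Pi.sub_apply] at h1 ⊢
      rw [hsum_total, hsum_total]
      have hedge := hG.2 e he
      by_cases ha : 0 < G e.1
      · have hb : 0 < G e.2 := by omega
        simp only [maxComp, if_pos ha, if_pos hb]; omega
      · have hGa : G e.1 = 0 := le_antisymm (by omega) (hG.1 e.1)
        simp only [maxComp, if_neg ha, mul_zero]
        rw [hzero e.1 hGa, hGa]
        by_cases hb : 0 < G e.2
        · have := hkey e.2 hb
          simp only [if_pos hb]; omega
        · have hGb : G e.2 = 0 := le_antisymm (by omega) (hG.1 e.2)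
          simp only [if_neg hb, mul_zero]
          rw [hzero e.2 hGb, hGb]
  · simp only [Multiset.card_add, Multiset.card_replicate]
    push_cast
    omega
end

section
/- Let v be a node of a standard graph G with label l = ℓ_G(v) > 0, and suppose G has exactly k standard components that give v the label 1. Then the number of standard v-decompositions of G is at least k/l. -/
/-- Standard labelings are closed under pointwise addition. -/
lemma IsStandard.add {V : Type*} {E : Set (V × V)} {a b : V → ℤ}
    (ha : IsStandard E a) (hb : IsStandard E b) : IsStandard E (a + b) := by
  refine ⟨fun w => add_nonneg (ha.1 w) (hb.1 w), fun e he => ?_⟩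
  exact add_le_add (ha.2 e he) (hb.2 e he)

/-- The "top slice" of a standard graph at threshold `G v`. -/
lemma exists_top_comp {V : Type*} {E : Set (V × V)} {G : V → ℤ} (hG : IsStandard E G)
    (v : V) (hv : 0 < G v) :
    ∃ H : V → ℤ, IsStdComp E G H ∧ H v = 1 := by
  refine ⟨fun w => if G v ≤ G w then 1 else 0, ⟨⟨?_, ?_⟩, ?_, ⟨?_, ?_⟩, ⟨v, ?_⟩⟩, ?_⟩
  · intro w; dsimp only; split <;> norm_num
  · intro e he; dsimp only
    rcases le_or_gt (G v) (G e.1) with h1 | h1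
    · rw [if_pos h1, if_pos (h1.trans (hG.2 e he))]
    · rw [if_neg (not_le.2 h1)]; split <;> norm_num
  · intro w; dsimp only; split <;> simp
  · intro w; simp only [Pi.sub_apply]
    split
    · omega
    · have := hG.1 w; omega
  · intro e he; simp only [Pi.sub_apply]
    have hle := hG.2 e he
    rcases le_or_gt (G v) (G e.1) with h1 | h1
    · rw [if_pos h1, if_pos (h1.trans hle)]; omega
    · rw [if_neg (not_le.2 h1)]; split <;> omega
  · simp
  · simp

/-- A standard component of `G - H₀` (with `H₀` standard) is a standard component of `G`. -/
lemma IsStdComp.of_sub {V : Type*} {E : Set (V × V)} {G H₀ H : V → ℤ}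
    (hH₀ : IsStandard E H₀) (h : IsStdComp E (G - H₀) H) : IsStdComp E G H := by
  obtain ⟨h1, h2, h3, h4⟩ := h
  refine ⟨h1, h2, ?_, h4⟩
  have : G - H = (G - H₀ - H) + H₀ := by ring
  rw [this]
  exact h3.add hH₀

/-- Any standard graph admits a family of components each giving `v` label 1, of
size `(G v).toNat`, whose removal leaves a standard graph. -/
lemma exists_partial_vdecomp {V : Type*} {E : Set (V × V)} (v : V) :
    ∀ (n : ℕ) (G : V → ℤ), IsStandard E G → (G v).toNat = n →
    ∃ D : Multiset (V → ℤ), (∀ H ∈ D, IsStdComp E G H ∧ H v = 1) ∧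
      IsStandard E (G - D.sum) ∧ D.card = n := by
  intro n
  induction n with
  | zero =>
    intro G hG _
    exact ⟨0, by simp, by simpa using hG, by simp⟩
  | succ m ih =>
    intro G hG hn
    have hv : 0 < G v := by omega
    obtain ⟨H₀, hH₀, hH₀v⟩ := exists_top_comp hG v hv
    have hG' : IsStandard E (G - H₀) := hH₀.2.2.1
    have hn' : ((G - H₀) v).toNat = m := by
      simp only [Pi.sub_apply, hH₀v]; omega
    obtain ⟨D', hD'1, hD'2, hD'3⟩ := ih (G - H₀) hG' hn'
    refine ⟨H₀ ::ₘ D', ?_, ?_, ?_⟩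
    · intro H hH
      rcases Multiset.mem_cons.1 hH with rfl | hH
      · exact ⟨hH₀, hH₀v⟩
      · exact ⟨(hD'1 H hH).1.of_sub hH₀.1, (hD'1 H hH).2⟩
    · rw [Multiset.sum_cons]
      have : G - (H₀ + D'.sum) = (G - H₀) - D'.sum := by ring
      rw [this]
      exact hD'2
    · simp [hD'3]

/-- Every standard component giving `v` label 1 lies in some standard
`v`-decomposition. -/
lemma mem_vdecomp {V : Type*} {E : Set (V × V)} {G : V → ℤ} (hG : IsStandard E G)
    {v : V} (hv : 0 < G v) {H₀ : V → ℤ} (hH₀ : IsStdComp E G H₀) (hH₀v : H₀ v = 1) :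
    ∃ D : Multiset (V → ℤ), IsStdVDecomp E G v D ∧ H₀ ∈ D := by
  have hG' : IsStandard E (G - H₀) := hH₀.2.2.1
  obtain ⟨D', hD'1, hD'2, hD'3⟩ :=
    exists_partial_vdecomp v ((G - H₀) v).toNat (G - H₀) hG' rfl
  refine ⟨H₀ ::ₘ D', ⟨?_, ?_, ?_⟩, Multiset.mem_cons_self _ _⟩
  · intro H hH
    rcases Multiset.mem_cons.1 hH with rfl | hH
    · exact ⟨hH₀, hH₀v⟩
    · exact ⟨(hD'1 H hH).1.of_sub hH₀.1, (hD'1 H hH).2⟩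
  · rw [Multiset.sum_cons]
    have : G - (H₀ + D'.sum) = (G - H₀) - D'.sum := by ring
    rw [this]
    exact hD'2
  · have : ((G - H₀) v) = G v - 1 := by simp [hH₀v]
    rw [Multiset.card_cons, hD'3]
    push_cast
    rw [this]
    omega

/-- Lower bound: with `k` standard components giving `v` label 1 and `l = l_G v > 0`,
the number of standard `v`-decompositions is at least `k / l`, i.e.
`l * #(v-decompositions) ≥ k`. -/
theorem vDecomp_lower_bound {V : Type*} [Fintype V] (E : Set (V × V))
    (hE : ∀ v, (v, v) ∉ E) (G : V → ℤ) (hG : IsStandard E G) (v : V) (hl : 0 < G v)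
    (k : ℕ) (hk : {H : V → ℤ | IsStdComp E G H ∧ H v = 1}.ncard = k) :
    k ≤ (G v).toNat * {D : Multiset (V → ℤ) | IsStdVDecomp E G v D}.ncard := by
  classical
  set n : ℕ := (G v).toNat with hn
  set Comp : Set (V → ℤ) := {H | IsStdComp E G H ∧ H v = 1} with hComp
  set Dec : Set (Multiset (V → ℤ)) := {D | IsStdVDecomp E G v D} with hDec
  -- the set of 0-1 labelings is finite
  have hZ01 : {H : V → ℤ | IsZeroOne H}.Finite := by
    have : {H : V → ℤ | IsZeroOne H} ⊆ Set.pi Set.univ (fun _ : V => ({0, 1} : Set ℤ)) := by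
      intro H hH w _
      rcases hH w with h | h <;> simp [h]
    exact (Set.Finite.pi (fun _ => by simp)).subset this
  have hFinC : Comp.Finite := hZ01.subset (fun H hH => hH.1.2.1)
  -- finiteness of the set of v-decompositions
  have hFinD : Dec.Finite := by
    set f : (V → ℤ) → (V → Bool) := fun H w => decide (H w = 1) with hf
    set g : (V → Bool) → (V → ℤ) := fun b w => if b w then 1 else 0 with hg
    have hgf : ∀ H : V → ℤ, IsZeroOne H → g (f H) = H := by
      intro H hH
      funext w
      rcases hH w with h | h <;> simp [hf, hg, h]
    have himg : (fun D : Multiset (V → ℤ) => D.map f) '' Dec ⊆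
        {M : Multiset (V → Bool) | M.card = n} := by
      rintro M ⟨D, hD, rfl⟩
      have : (D.card : ℤ) = G v := hD.2.2
      simp only [Set.mem_setOf_eq, Multiset.card_map]
      omega
    have hfin : {M : Multiset (V → Bool) | M.card = n}.Finite := by
      have hr := Set.finite_range (fun s : Sym (V → Bool) n => (s : Multiset (V → Bool)))
      refine hr.subset ?_
      intro M hM
      exact ⟨⟨M, hM⟩, rfl⟩
    refine Set.Finite.of_finite_image (hfin.subset himg) ?_
    intro D hD D' hD' hDD'
    have key : ∀ D₀ : Multiset (V → ℤ), D₀ ∈ Dec → (D₀.map f).map g = D₀ := by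
      intro D₀ hD₀
      rw [Multiset.map_map]
      calc D₀.map (g ∘ f) = D₀.map id := by
            apply Multiset.map_congr rfl
            intro H hH
            exact hgf H ((hD₀.1 H hH).1.2.1)
        _ = D₀ := Multiset.map_id D₀
    calc D = (D.map f).map g := (key D hD).symm
      _ = (D'.map f).map g := by simp only at hDD'; rw [hDD']
      _ = D' := key D' hD'
  -- counting
  have hsub : hFinC.toFinset ⊆ hFinD.toFinset.biUnion (fun D => D.toFinset) := by
    intro H hH
    rw [Set.Finite.mem_toFinset] at hH
    obtain ⟨D, hD, hmem⟩ := mem_vdecomp hG hl hH.1 hH.2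
    exact Finset.mem_biUnion.2 ⟨D, (Set.Finite.mem_toFinset _).2 hD, Multiset.mem_toFinset.2 hmem⟩
  have hcard : hFinC.toFinset.card ≤ hFinD.toFinset.card * n := by
    calc hFinC.toFinset.card
        ≤ (hFinD.toFinset.biUnion (fun D => D.toFinset)).card := Finset.card_le_card hsub
      _ ≤ ∑ D ∈ hFinD.toFinset, D.toFinset.card := Finset.card_biUnion_le
      _ ≤ hFinD.toFinset.card * n := by
          apply Finset.sum_le_card_nsmul
          intro D hD
          rw [Set.Finite.mem_toFinset] at hD
          have h1 : D.toFinset.card ≤ Multiset.card D := Multiset.toFinset_card_le D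
          have h2 : (Multiset.card D : ℤ) = G v := hD.2.2
          have : Multiset.card D = n := by omega
          omega
  have hkC : k = hFinC.toFinset.card := by
    rw [← hk, Set.ncard_eq_toFinset_card Comp hFinC]
  have hDC : Dec.ncard = hFinD.toFinset.card := Set.ncard_eq_toFinset_card Dec hFinD
  rw [hkC]
  calc hFinC.toFinset.card ≤ hFinD.toFinset.card * n := hcard
    _ = n * Dec.ncard := by rw [hDC, Nat.mul_comm]
end

section
/- Let v be a node of minimal positive label in a standard graph G, and suppose G has exactly k standard components that give v the label 1. Then G has at least k standard v-decompositions. -/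
/-- The set of multisets of bounded size with elements in a fixed finset is finite. -/
lemma multiset_bounded_finite {α : Type*} [DecidableEq α] (s : Finset α) (n : ℕ) :
    {m : Multiset α | m.card ≤ n ∧ ∀ a ∈ m, a ∈ s}.Finite := by
  have h1 : {m : Multiset α | m ≤ n • s.val}.Finite := by
    apply Set.Finite.ofFinset (n • s.val).powerset.toFinset
    intro m
    simp [Multiset.mem_powerset]
  apply h1.subset
  rintro m ⟨hcard, hmem⟩
  simp only [Set.mem_setOf_eq]
  rw [Multiset.le_iff_count]
  intro a
  by_cases ha : a ∈ m
  · have h2 : Multiset.count a m ≤ n := le_trans (Multiset.count_le_card a m) hcard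
    have h3 : Multiset.count a s.val = 1 :=
      Multiset.count_eq_one_of_mem s.nodup (hmem a ha)
    rw [Multiset.count_nsmul, h3]
    omega
  · simp [Multiset.count_eq_zero_of_notMem ha]

/-- If `v` has minimal positive label and `G` has exactly `k` standard components giving
`v` label 1, then there are at least `k` standard `v`-decompositions of `G`. -/
theorem vDecomp_lower_bound_minimal {V : Type*} [Fintype V] (E : Set (V × V))
    (hE : ∀ v, (v, v) ∉ E) (G : V → ℤ) (hG : IsStandard E G) (v : V)
    (hv : 0 < G v ∧ ∀ w, 0 < G w → G v ≤ G w)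
    (k : ℕ) (hk : {H : V → ℤ | IsStdComp E G H ∧ H v = 1}.ncard = k) :
    k ≤ {D : Multiset (V → ℤ) | IsStdVDecomp E G v D}.ncard := by
  classical
  obtain ⟨hvpos, hvmin⟩ := hv
  obtain ⟨hGnn, hGedge⟩ := hG
  obtain ⟨n, hnv⟩ : ∃ n : ℕ, (n : ℤ) = G v :=
    ⟨(G v).toNat, Int.toNat_of_nonneg hvpos.le⟩
  have hn1 : 1 ≤ n := by clear hk; omega
  -- The indicator of positive labels
  set K : V → ℤ := fun w => if G v ≤ G w then 1 else 0 with hKdef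
  have hKzo : IsZeroOne K := by
    intro w
    by_cases h : G v ≤ G w <;> simp [hKdef, h]
  have hK1 : ∀ w, 0 < G w → K w = 1 ∧ G v ≤ G w := by
    intro w hw
    have := hvmin w hw
    simp [hKdef, this]
  have hK0 : ∀ w, K w ≠ 1 → G w = 0 := by
    intro w hw
    by_contra hc
    have hpos : 0 < G w := lt_of_le_of_ne (hGnn w) (Ne.symm hc)
    exact hw (hK1 w hpos).1
  have hKv : K v = 1 := (hK1 v hvpos).1
  have hKcomp : IsStdComp E G K := by
    refine ⟨⟨fun w => ?_, fun e he => ?_⟩, hKzo, ⟨fun w => ?_, fun e he => ?_⟩, ⟨v, by rw [hKv]; exact one_ne_zero⟩⟩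
    · rcases hKzo w with h | h <;> simp [h]
    · have hGe := hGedge e he
      rcases hKzo e.1 with h1 | h1
      · rcases hKzo e.2 with h2 | h2 <;> simp [h1, h2]
      · rcases hKzo e.2 with h2 | h2
        · have : G e.2 = 0 := hK0 e.2 (by rw [h2]; norm_num)
          have h1' : G v ≤ G e.1 := by
            by_contra hc
            simp [hKdef, hc] at h1
          linarith
        · simp [h1, h2]
    · rcases hKzo w with h | h
      · simp [Pi.sub_apply, h]; exact hGnn w
      · have h' : G v ≤ G w := by
          by_contra hc
          simp [hKdef, hc] at h
        simp [Pi.sub_apply, h]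
        linarith
    · have hGe := hGedge e he
      rcases hKzo e.1 with h1 | h1
      · rcases hKzo e.2 with h2 | h2
        · simp [Pi.sub_apply, h1, h2]; linarith
        · have h1' : G e.1 = 0 := hK0 e.1 (by rw [h1]; norm_num)
          have h2' : G v ≤ G e.2 := by
            by_contra hc
            simp [hKdef, hc] at h2
          simp [Pi.sub_apply, h1, h2]
          linarith
      · rcases hKzo e.2 with h2 | h2
        · have h2' : G e.2 = 0 := hK0 e.2 (by rw [h2]; norm_num)
          have h1' : G v ≤ G e.1 := by
            by_contra hc
            simp [hKdef, hc] at h1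
          linarith
        · simp [Pi.sub_apply, h1, h2]; linarith
  set S := {H : V → ℤ | IsStdComp E G H ∧ H v = 1} with hSdef
  set T := {D : Multiset (V → ℤ) | IsStdVDecomp E G v D} with hTdef
  set f : (V → ℤ) → Multiset (V → ℤ) :=
    fun H => H ::ₘ Multiset.replicate (n - 1) K with hfdef
  have hcast : ((n - 1 : ℕ) : ℤ) = G v - 1 := by clear hk; omega
  -- sums of f H
  have hfsum : ∀ (H : V → ℤ) (w : V), (f H).sum w = H w + (G v - 1) * K w := by
    intro H w
    have h1 : (f H).sum = H + (n - 1) • K := by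
      simp [hfdef, Multiset.sum_cons, Multiset.sum_replicate]
    rw [h1, Pi.add_apply, Pi.smul_apply, nsmul_eq_mul, hcast]
  have hfT : ∀ H ∈ S, f H ∈ T := by
    intro H hH
    obtain ⟨⟨⟨hHnn, hHedge⟩, hHzo, ⟨hGHnn, hGHedge⟩, hHne⟩, hHv⟩ := hH
    -- facts about H
    have hHle : ∀ w, H w ≤ G w := by
      intro w
      have := hGHnn w
      simp [Pi.sub_apply] at this
      linarith
    have hHone : ∀ w, H w = 1 → K w = 1 ∧ G v ≤ G w := by
      intro w hw
      exact hK1 w (by have := hHle w; linarith)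
    constructor
    · -- each member is a standard component giving v label 1
      intro H' hH'
      simp only [hfdef, Multiset.mem_cons, Multiset.mem_replicate] at hH'
      rcases hH' with rfl | ⟨-, rfl⟩
      · exact ⟨⟨⟨hHnn, hHedge⟩, hHzo, ⟨hGHnn, hGHedge⟩, hHne⟩, hHv⟩
      · exact ⟨hKcomp, hKv⟩
    constructor
    · -- G - sum is standard
      constructor
      · intro w
        simp only [Pi.sub_apply]
        rw [hfsum H w]
        rcases hHzo w with h | h
        · rcases hKzo w with h' | h'
          · simp [h, h']; exact hGnn w
          · have hw : G v ≤ G w := by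
              by_contra hc
              simp [hKdef, hc] at h'
            simp [h, h']
            linarith
        · obtain ⟨hk1, hk2⟩ := hHone w h
          simp [h, hk1]
          linarith
      · intro e he
        have hGe := hGedge e he
        have hGHe := hGHedge e he
        simp only [Pi.sub_apply] at hGHe ⊢
        rw [hfsum H e.1, hfsum H e.2]
        rcases hKzo e.1 with h1 | h1
        · have h1' : G e.1 = 0 := hK0 e.1 (by rw [h1]; norm_num)
          have hH1 : H e.1 = 0 := by
            have := hHle e.1
            have := hHnn e.1
            linarith
          rcases hKzo e.2 with h2 | h2
          · have h2' : G e.2 = 0 := hK0 e.2 (by rw [h2]; norm_num)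
            have hH2 : H e.2 = 0 := by
              have := hHle e.2
              have := hHnn e.2
              linarith
            simp [h1, h2, hH1, hH2]
            linarith
          · have h2' : G v ≤ G e.2 := by
              by_contra hc
              simp [hKdef, hc] at h2
            rcases hHzo e.2 with hh2 | hh2
            · simp [h1, h2, hH1, hh2]; linarith
            · obtain ⟨-, hb⟩ := hHone e.2 hh2
              simp [h1, h2, hH1, hh2]
              linarith
        · rcases hKzo e.2 with h2 | h2
          · have h2' : G e.2 = 0 := hK0 e.2 (by rw [h2]; norm_num)
            have h1' : G v ≤ G e.1 := by
              by_contra hc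
              simp [hKdef, hc] at h1
            linarith
          · simp [h1, h2]
            linarith
    · -- cardinality
      simp only [hfdef, Multiset.card_cons, Multiset.card_replicate]
      rw [Nat.sub_add_cancel hn1]
      exact hnv
  have hinj : Set.InjOn f S := by
    intro a _ b _ hab
    exact (Multiset.cons_inj_left _).mp hab
  -- finiteness of T
  set Z : Finset (V → ℤ) :=
    Finset.image (fun g : V → Fin 2 => fun w => ((g w : ℕ) : ℤ)) Finset.univ with hZdef
  have hZmem : ∀ H : V → ℤ, IsZeroOne H → H ∈ Z := by
    intro H hH
    simp only [hZdef, Finset.mem_image]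
    refine ⟨fun w => if H w = 0 then 0 else 1, Finset.mem_univ _, ?_⟩
    funext w
    rcases hH w with h | h <;> simp [h]
  have hTfin : T.Finite := by
    apply (multiset_bounded_finite Z n).subset
    rintro D ⟨hD1, hD2, hD3⟩
    constructor
    · exact (Nat.cast_inj.mp (hD3.trans hnv.symm)).le
    · intro H hH
      exact hZmem H (hD1 H hH).1.2.1
  calc k = S.ncard := hk.symm
    _ = (f '' S).ncard := (Set.ncard_image_of_injOn hinj).symm
    _ ≤ T.ncard := Set.ncard_le_ncard (Set.image_subset_iff.mpr hfT) hTfin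
end

section
/- The Connect Four sum of two finite standard sets in ℕ^d is again a finite standard set, and its cardinality is the sum of the cardinalities of the two summands. -/
open Pointwise

/-- A *standard set* in `ℕ^n`: a finite set whose complement `C` satisfies `C + ℕ^n = C`. -/
def IsStdSet {n : ℕ} (S : Set (Fin n → ℕ)) : Prop :=
  S.Finite ∧ Sᶜ + (Set.univ : Set (Fin n → ℕ)) = Sᶜ

/-- Projection `ℕ^{d+1} → ℕ^d` to the first `d` coordinates. -/
def proj {d : ℕ} (b : Fin (d + 1) → ℕ) : Fin d → ℕ := fun i => b i.castSucc

/-- The *height* of `S ⊆ ℕ^{d+1}` over `γ ∈ ℕ^d`: the cardinality of the fiber of the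
projection over `γ`. -/
noncomputable def height {d : ℕ} (S : Set (Fin (d + 1) → ℕ)) (g : Fin d → ℕ) : ℕ :=
  {b ∈ S | proj b = g}.ncard

/-- The *Connect Four sum* of two subsets of `ℕ^{d+1}`. -/
def C4sum {d : ℕ} (S T : Set (Fin (d + 1) → ℕ)) : Set (Fin (d + 1) → ℕ) :=
  {b | b (Fin.last d) < height S (proj b) + height T (proj b)}

section Aux

variable {d : ℕ}

lemma proj_snoc (g : Fin d → ℕ) (k : ℕ) : proj (Fin.snoc g k) = g := by
  funext i; simp [proj]

lemma snoc_proj (b : Fin (d + 1) → ℕ) : Fin.snoc (proj b) (b (Fin.last d)) = b := by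
  have : proj b = Fin.init b := rfl
  rw [this, Fin.snoc_init_self]

lemma snoc_injective (g : Fin d → ℕ) :
    Function.Injective (fun k : ℕ => (Fin.snoc g k : Fin (d + 1) → ℕ)) := by
  intro a b h
  have := congrFun h (Fin.last d)
  simpa using this

lemma snoc_le_snoc {g g' : Fin d → ℕ} {k k' : ℕ} (hg : g ≤ g') (hk : k ≤ k') :
    (Fin.snoc g k : Fin (d + 1) → ℕ) ≤ Fin.snoc g' k' := by
  intro i
  refine Fin.lastCases ?_ ?_ i
  · simpa using hk
  · intro j; simpa using hg j

lemma dc_of_std {n : ℕ} {S : Set (Fin n → ℕ)}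
    (h : Sᶜ + (Set.univ : Set (Fin n → ℕ)) = Sᶜ)
    {a b : Fin n → ℕ} (hab : a ≤ b) (hb : b ∈ S) : a ∈ S := by
  by_contra ha
  have hmem : a + (b - a) ∈ Sᶜ + (Set.univ : Set (Fin n → ℕ)) :=
    Set.add_mem_add ha (Set.mem_univ _)
  rw [h] at hmem
  have hba : a + (b - a) = b := by
    funext i
    exact Nat.add_sub_cancel' (hab i)
  rw [hba] at hmem
  exact hmem hb

lemma nat_dc_mem_iff {K : Set ℕ} (hfin : K.Finite)
    (hdc : ∀ ⦃j k : ℕ⦄, j ≤ k → k ∈ K → j ∈ K) (k : ℕ) : k ∈ K ↔ k < K.ncard := by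
  have hIio : ∀ n : ℕ, (Set.Iio n).ncard = n := by
    intro n
    rw [← Finset.coe_range, Set.ncard_coe_finset, Finset.card_range]
  constructor
  · intro hk
    have hsub : Set.Iio (k + 1) ⊆ K := fun j hj => hdc (Nat.lt_succ_iff.mp hj) hk
    have h1 : (Set.Iio (k + 1)).ncard ≤ K.ncard := Set.ncard_le_ncard hsub hfin
    rw [hIio] at h1
    omega
  · intro hk
    by_contra hkn
    have hsub : K ⊆ Set.Iio k := by
      intro m hm
      rw [Set.mem_Iio]
      by_contra hmk
      push_neg at hmk
      exact hkn (hdc hmk hm)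
    have h1 : K.ncard ≤ (Set.Iio k).ncard := Set.ncard_le_ncard hsub (Set.finite_Iio k)
    rw [hIio] at h1
    omega

lemma mem_iff_lt_height {S : Set (Fin (d + 1) → ℕ)} (hfin : S.Finite)
    (hdc : ∀ ⦃a b : Fin (d + 1) → ℕ⦄, a ≤ b → b ∈ S → a ∈ S)
    (g : Fin d → ℕ) (k : ℕ) : Fin.snoc g k ∈ S ↔ k < height S g := by
  set K : Set ℕ := {k | (Fin.snoc g k : Fin (d + 1) → ℕ) ∈ S} with hK
  have hKfin : K.Finite := Set.Finite.preimage ((snoc_injective g).injOn) hfin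
  have hKdc : ∀ ⦃j k : ℕ⦄, j ≤ k → k ∈ K → j ∈ K := by
    intro j k hjk hk
    exact hdc (snoc_le_snoc le_rfl hjk) hk
  have hfib : {b ∈ S | proj b = g} = (fun k : ℕ => (Fin.snoc g k : Fin (d + 1) → ℕ)) '' K := by
    ext b
    constructor
    · rintro ⟨hb, hpb⟩
      refine ⟨b (Fin.last d), ?_, ?_⟩
      · show (Fin.snoc g (b (Fin.last d)) : Fin (d + 1) → ℕ) ∈ S
        rw [← hpb, snoc_proj]; exact hb
      · rw [← hpb]; exact snoc_proj b
    · rintro ⟨k, hk, rfl⟩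
      exact ⟨hk, proj_snoc g k⟩
  have hh : height S g = K.ncard := by
    rw [height, hfib, Set.ncard_image_of_injective _ (snoc_injective g)]
  rw [hh]
  exact nat_dc_mem_iff hKfin hKdc k

lemma height_antitone {S : Set (Fin (d + 1) → ℕ)} (hfin : S.Finite)
    (hdc : ∀ ⦃a b : Fin (d + 1) → ℕ⦄, a ≤ b → b ∈ S → a ∈ S)
    {g g' : Fin d → ℕ} (hgg : g ≤ g') : height S g' ≤ height S g := by
  by_contra h
  push_neg at h
  have h1 : (Fin.snoc g' (height S g) : Fin (d + 1) → ℕ) ∈ S :=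
    (mem_iff_lt_height hfin hdc g' (height S g)).2 h
  have h2 : (Fin.snoc g (height S g) : Fin (d + 1) → ℕ) ∈ S :=
    hdc (snoc_le_snoc hgg le_rfl) h1
  have h3 := (mem_iff_lt_height hfin hdc g (height S g)).1 h2
  omega

lemma height_c4 (S T : Set (Fin (d + 1) → ℕ)) (g : Fin d → ℕ) :
    height (C4sum S T) g = height S g + height T g := by
  have hfib : {b ∈ C4sum S T | proj b = g}
      = (fun k : ℕ => (Fin.snoc g k : Fin (d + 1) → ℕ)) '' Set.Iio (height S g + height T g) := by
    ext b
    constructor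
    · rintro ⟨hb, hpb⟩
      refine ⟨b (Fin.last d), ?_, by rw [← hpb]; exact snoc_proj b⟩
      have hb' : b (Fin.last d) < height S (proj b) + height T (proj b) := hb
      rw [hpb] at hb'
      exact hb'
    · rintro ⟨k, hk, rfl⟩
      refine ⟨?_, proj_snoc g k⟩
      show (Fin.snoc g k : Fin (d + 1) → ℕ) (Fin.last d)
        < height S (proj (Fin.snoc g k)) + height T (proj (Fin.snoc g k))
      rw [proj_snoc, Fin.snoc_last]
      exact hk
  rw [height, hfib, Set.ncard_image_of_injective _ (snoc_injective g),
    ← Finset.coe_range, Set.ncard_coe_finset, Finset.card_range]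

lemma proj_mem_of_c4 {S T : Set (Fin (d + 1) → ℕ)} {b : Fin (d + 1) → ℕ}
    (hb : b ∈ C4sum S T) : proj b ∈ proj '' S ∪ proj '' T := by
  have hb' : b (Fin.last d) < height S (proj b) + height T (proj b) := hb
  rcases Nat.eq_zero_or_pos (height S (proj b)) with hzero | hpos
  · have hTpos : height T (proj b) ≠ 0 := by omega
    have hne : {a ∈ T | proj a = proj b}.Nonempty := Set.nonempty_of_ncard_ne_zero hTpos
    obtain ⟨a, haT, hap⟩ := hne
    exact Or.inr ⟨a, haT, hap⟩
  · have hSpos : height S (proj b) ≠ 0 := by omega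
    have hne : {a ∈ S | proj a = proj b}.Nonempty := Set.nonempty_of_ncard_ne_zero hSpos
    obtain ⟨a, haS, hap⟩ := hne
    exact Or.inl ⟨a, haS, hap⟩

lemma c4_finite {S T : Set (Fin (d + 1) → ℕ)} (hSfin : S.Finite) (hTfin : T.Finite) :
    (C4sum S T).Finite := by
  have hG : (proj '' S ∪ proj '' T).Finite := (hSfin.image _).union (hTfin.image _)
  refine Set.Finite.subset
    (hG.biUnion (fun g _ =>
      (Set.finite_Iio (height S g + height T g)).image
        (fun k : ℕ => (Fin.snoc g k : Fin (d + 1) → ℕ)))) ?_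
  intro b hb
  have hb' : b (Fin.last d) < height S (proj b) + height T (proj b) := hb
  exact Set.mem_biUnion (proj_mem_of_c4 hb) ⟨b (Fin.last d), hb', snoc_proj b⟩

lemma ncard_eq_sum_height {U : Set (Fin (d + 1) → ℕ)} (hU : U.Finite)
    (t : Finset (Fin d → ℕ)) (ht : ∀ b ∈ U, proj b ∈ t) :
    U.ncard = ∑ g ∈ t, height U g := by
  classical
  rw [Set.ncard_eq_toFinset_card _ hU]
  rw [Finset.card_eq_sum_card_fiberwise (f := proj) (t := t)
    (fun b hb => ht b (hU.mem_toFinset.1 hb))]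
  refine Finset.sum_congr rfl fun g _ => ?_
  have hset : {b ∈ U | proj b = g} = ↑(hU.toFinset.filter (fun b => proj b = g)) := by
    ext b
    simp [Set.Finite.mem_toFinset]
  rw [height, hset, Set.ncard_coe_finset]

end Aux

/-- The Connect Four sum of two finite standard sets is a finite standard set, and its
cardinality is the sum of the cardinalities of the summands. -/
theorem c4sum_isStdSet {d : ℕ} (S T : Set (Fin (d + 1) → ℕ))
    (hS : IsStdSet S) (hT : IsStdSet T) :
    IsStdSet (C4sum S T) ∧ (C4sum S T).ncard = S.ncard + T.ncard := by
  classical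
  obtain ⟨hSfin, hSstd⟩ := hS
  obtain ⟨hTfin, hTstd⟩ := hT
  have hSdc : ∀ ⦃a b : Fin (d + 1) → ℕ⦄, a ≤ b → b ∈ S → a ∈ S :=
    fun a b hab hb => dc_of_std hSstd hab hb
  have hTdc : ∀ ⦃a b : Fin (d + 1) → ℕ⦄, a ≤ b → b ∈ T → a ∈ T :=
    fun a b hab hb => dc_of_std hTstd hab hb
  have hfin : (C4sum S T).Finite := c4_finite hSfin hTfin
  have hcompl : (C4sum S T)ᶜ + (Set.univ : Set (Fin (d + 1) → ℕ)) = (C4sum S T)ᶜ := by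
    apply Set.Subset.antisymm
    · intro x hx
      rw [Set.mem_add] at hx
      obtain ⟨a, ha, y, -, rfl⟩ := hx
      have ha' : height S (proj a) + height T (proj a) ≤ a (Fin.last d) := Nat.not_lt.mp ha
      have hle : proj a ≤ proj (a + y) := by
        intro i
        exact Nat.le_add_right _ _
      have h1 : height S (proj (a + y)) ≤ height S (proj a) := height_antitone hSfin hSdc hle
      have h2 : height T (proj (a + y)) ≤ height T (proj a) := height_antitone hTfin hTdc hle
      have hlast : a (Fin.last d) ≤ (a + y) (Fin.last d) := Nat.le_add_right _ _
      show ¬ ((a + y) (Fin.last d) < height S (proj (a + y)) + height T (proj (a + y)))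
      omega
    · intro x hx
      rw [Set.mem_add]
      exact ⟨x, hx, 0, Set.mem_univ 0, add_zero x⟩
  refine ⟨⟨hfin, hcompl⟩, ?_⟩
  set t : Finset (Fin d → ℕ) := (hSfin.toFinset.image proj) ∪ (hTfin.toFinset.image proj) with ht
  have htS : ∀ b ∈ S, proj b ∈ t := fun b hb =>
    Finset.mem_union_left _ (Finset.mem_image_of_mem proj (hSfin.mem_toFinset.2 hb))
  have htT : ∀ b ∈ T, proj b ∈ t := fun b hb =>
    Finset.mem_union_right _ (Finset.mem_image_of_mem proj (hTfin.mem_toFinset.2 hb))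
  have htC : ∀ b ∈ C4sum S T, proj b ∈ t := by
    intro b hb
    rcases proj_mem_of_c4 hb with ⟨a, haS, hap⟩ | ⟨a, haT, hap⟩
    · rw [← hap]; exact htS a haS
    · rw [← hap]; exact htT a haT
  rw [ncard_eq_sum_height hfin t htC, ncard_eq_sum_height hSfin t htS,
    ncard_eq_sum_height hTfin t htT, ← Finset.sum_add_distrib]
  exact Finset.sum_congr rfl fun g _ => height_c4 S T g
end

section
/- For any finite standard set Δ ⊆ ℕ^d, Δ equals the set of β ∈ ℕ^d such that the last coordinate of β is strictly less than the cardinality of the fiber of the projection to the first d−1 coordinates of Δ over the projection of β. -/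
open Pointwise

lemma ncard_Iic_nat (k : ℕ) : (Set.Iic k).ncard = k + 1 := by
  rw [← Finset.coe_Iic, Set.ncard_coe_finset, Nat.card_Iic]

lemma ncard_Iio_nat (k : ℕ) : (Set.Iio k).ncard = k := by
  rw [← Finset.coe_Iio, Set.ncard_coe_finset, Nat.card_Iio]

lemma downclosed_eq_Iio (T : Set ℕ) (hfin : T.Finite)
    (hdc : ∀ j k, j ≤ k → k ∈ T → j ∈ T) : T = Set.Iio T.ncard := by
  ext k
  simp only [Set.mem_Iio]
  constructor
  · intro hk
    have hsub : Set.Iic k ⊆ T := fun j hj => hdc j k hj hk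
    have := Set.ncard_le_ncard hsub hfin
    rw [ncard_Iic_nat] at this
    omega
  · intro hk
    by_contra hkT
    have hsub : T ⊆ Set.Iio k := by
      intro t ht
      by_contra h
      simp only [Set.mem_Iio, not_lt] at h
      exact hkT (hdc k t h ht)
    have := Set.ncard_le_ncard hsub (Set.finite_Iio k)
    rw [ncard_Iio_nat] at this
    omega

/-- A finite standard set is determined by its fiber cardinalities: `Δ` equals the set of
`β` whose last coordinate is less than the height of `Δ` over the projection of `β`. -/
theorem stdSet_eq_heights {d : ℕ} (S : Set (Fin (d + 1) → ℕ)) (hS : IsStdSet S) :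
    S = {b | b (Fin.last d) < height S (proj b)} := by
  obtain ⟨hfin, hcomp⟩ := hS
  have hdc : ∀ x y : Fin (d + 1) → ℕ, (∀ i, x i ≤ y i) → y ∈ S → x ∈ S := by
    intro x y hxy hy
    by_contra hx
    have hy' : y = x + fun i => y i - x i := by funext i; simp only [Pi.add_apply]; have := hxy i; omega
    have : y ∈ Sᶜ := by
      rw [← hcomp, hy']
      exact Set.add_mem_add hx trivial
    exact this hy
  ext b
  set g := proj b with hg
  set T : Set ℕ := {k | Fin.snoc g k ∈ S} with hT
  have hsnocb : (Fin.snoc g (b (Fin.last d)) : Fin (d+1) → ℕ) = b := Fin.snoc_init_self b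
  have hbT : b ∈ S ↔ b (Fin.last d) ∈ T := by
    rw [hT]; simp only [Set.mem_setOf_eq, hsnocb]
  have hTfin : T.Finite := by
    have hsub : T ⊆ (fun f => f (Fin.last d)) '' S := fun k hk =>
      ⟨Fin.snoc g k, hk, Fin.snoc_last _ _⟩
    exact (hfin.image _).subset hsub
  have hTdc : ∀ j k, j ≤ k → k ∈ T → j ∈ T := by
    intro j k hjk hk
    refine hdc _ _ (fun i => ?_) hk
    refine Fin.lastCases ?_ (fun i => ?_) i <;> simp [Fin.snoc_last, Fin.snoc_castSucc, hjk]
  have hheight : height S g = T.ncard := by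
    have himg : (fun k => (Fin.snoc g k : Fin (d+1) → ℕ)) '' T = {c ∈ S | proj c = g} := by
      ext c
      constructor
      · rintro ⟨k, hk, rfl⟩
        refine ⟨hk, ?_⟩
        funext i; simp [proj, Fin.snoc_castSucc]
      · rintro ⟨hc, hcp⟩
        refine ⟨c (Fin.last d), ?_, ?_⟩
        · show (Fin.snoc g (c (Fin.last d)) : Fin (d+1) → ℕ) ∈ S
          rw [← hcp]
          rw [show (Fin.snoc (proj c) (c (Fin.last d)) : Fin (d+1) → ℕ) = c from
            Fin.snoc_init_self c]
          exact hc
        · rw [← hcp]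
          exact Fin.snoc_init_self c
    have hinj : Function.Injective (fun k => (Fin.snoc g k : Fin (d+1) → ℕ)) := by
      intro a b hab
      have := congrArg (fun f => f (Fin.last d)) hab
      simpa [Fin.snoc_last] using this
    rw [height, ← himg, Set.ncard_image_of_injective _ hinj]
  simp only [Set.mem_setOf_eq, ← hg, hheight, hbT]
  rw [downclosed_eq_Iio T hTfin hTdc]
  simp [ncard_Iio_nat]
end
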